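/- arXiv:2308.04734 — 2 statements merged into one kernel-verified Lean document; each statement's English description precedes it below -/
import Mathlib

section
/- For every integer d > 2, E_MB[2,d] = (√π/2) · Γ(d/2) / Γ(d/2 + 1/2); moreover, for integers d_1, d_2 > 1 and 1 ≤ p_1, p_2 ≤ min(d_1, d_2), the ratios satisfy E_MB[p_1, d_1] / E_MB[p_2, d_1] = E_MB[p_1, d_2] / E_MB[p_2, d_2] and E_MB[p_1, d_1] / E_MB[p_1, d_2] = E_MB[p_2, d_1] / E_MB[p_2, d_2]. -/
open MeasureTheory Real Set Metric

noncomputable def Ig (n : ℕ) : ℝ := ∫ r in Ioi (0:ℝ), r ^ n * Real.exp (-π * r ^ 2)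

lemma Ig_eq (n : ℕ) :
    Ig n = π ^ (-((n:ℝ) + 1) / 2) * (1 / 2) * Real.Gamma (((n:ℝ) + 1) / 2) := by
  rw [Ig, ← integral_rpow_mul_exp_neg_mul_rpow (two_pos)
    (neg_one_lt_zero.trans_le (Nat.cast_nonneg n)) pi_pos]
  refine setIntegral_congr_fun measurableSet_Ioi fun x hx => ?_
  rw [show ((2:ℝ)) = ((2:ℕ):ℝ) by norm_num, Real.rpow_natCast, Real.rpow_natCast]

lemma Ig_pos (n : ℕ) : 0 < Ig n := by
  rw [Ig_eq]
  have := Real.Gamma_pos_of_pos (show (0:ℝ) < ((n:ℝ)+1)/2 by positivity)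
  positivity

lemma volumeIoiPow_integral {n : ℕ} :
    (∫ r : Ioi (0:ℝ), (r : ℝ) * Real.exp (-π * (r:ℝ) ^ 2) ∂(Measure.volumeIoiPow n))
      = Ig (n + 1) := by
  simp only [Measure.volumeIoiPow, ENNReal.ofReal]
  rw [integral_withDensity_eq_integral_smul ((measurable_subtype_coe.pow_const _).real_toNNReal),
    integral_subtype_comap measurableSet_Ioi
      (fun a : ℝ => Real.toNNReal (a ^ n) • (a * Real.exp (-π * a ^ 2)))]
  refine setIntegral_congr_fun measurableSet_Ioi fun x hx => ?_
  rw [NNReal.smul_def, Real.coe_toNNReal _ (pow_nonneg hx.out.le _), smul_eq_mul, pow_succ]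
  ring

lemma polar {d : ℕ} (hd : 0 < d) (f : EuclideanSpace ℝ (Fin d) → ℝ)
    (hhom : ∀ (r : ℝ), 0 ≤ r → ∀ x, f (r • x) = r * f x) :
    ∫ x : EuclideanSpace ℝ (Fin d), f x * Real.exp (-π * ‖x‖ ^ 2) =
      (∫ ω : Metric.sphere (0 : EuclideanSpace ℝ (Fin d)) 1, f ω ∂(volume.toSphere)) * Ig d := by
  haveI : Nontrivial (EuclideanSpace ℝ (Fin d)) := by
    refine Module.nontrivial_of_finrank_pos (R := ℝ) ?_
    rw [finrank_euclideanSpace_fin]; exact hd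
  have hdim : Module.finrank ℝ (EuclideanSpace ℝ (Fin d)) = d := finrank_euclideanSpace_fin
  calc
    ∫ x : EuclideanSpace ℝ (Fin d), f x * Real.exp (-π * ‖x‖ ^ 2)
        = ∫ x : ({0}ᶜ : Set (EuclideanSpace ℝ (Fin d))), f x.1 * Real.exp (-π * ‖x.1‖ ^ 2) ∂((volume : Measure (EuclideanSpace ℝ (Fin d))).comap Subtype.val) := by
      rw [integral_subtype_comap (measurableSet_singleton _).compl
        (fun x => f x * Real.exp (-π * ‖x‖ ^ 2)), restrict_compl_singleton]
    _ = ∫ z : sphere (0 : EuclideanSpace ℝ (Fin d)) 1 × Ioi (0:ℝ), f z.1 * ((z.2 : ℝ) * Real.exp (-π * (z.2:ℝ) ^ 2))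
          ∂(volume.toSphere.prod (Measure.volumeIoiPow (Module.finrank ℝ (EuclideanSpace ℝ (Fin d)) - 1))) := by
      rw [← ((volume : Measure (EuclideanSpace ℝ (Fin d))).measurePreserving_homeomorphUnitSphereProd).integral_comp
        (Homeomorph.measurableEmbedding _)
        (fun z => f z.1 * ((z.2 : ℝ) * Real.exp (-π * (z.2:ℝ) ^ 2)))]
      refine integral_congr_ae (Filter.Eventually.of_forall fun x => ?_)
      have hx0 : (x : EuclideanSpace ℝ (Fin d)) ≠ 0 := x.2
      have hn : ‖(x : EuclideanSpace ℝ (Fin d))‖ ≠ 0 := norm_ne_zero_iff.2 hx0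
      simp only [homeomorphUnitSphereProd_apply_fst_coe, homeomorphUnitSphereProd_apply_snd_coe]
      rw [hhom _ (by positivity)]
      field_simp
    _ = (∫ ω : sphere (0 : EuclideanSpace ℝ (Fin d)) 1, f ω ∂(volume.toSphere)) *
          (∫ r : Ioi (0:ℝ), (r : ℝ) * Real.exp (-π * (r:ℝ) ^ 2)
            ∂(Measure.volumeIoiPow (Module.finrank ℝ (EuclideanSpace ℝ (Fin d)) - 1))) :=
      integral_prod_mul (fun ω : sphere (0 : EuclideanSpace ℝ (Fin d)) 1 => f ω)
        (fun r : Ioi (0:ℝ) => (r : ℝ) * Real.exp (-π * (r:ℝ) ^ 2))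
    _ = (∫ ω : sphere (0 : EuclideanSpace ℝ (Fin d)) 1, f ω ∂(volume.toSphere)) * Ig d := by
      rw [volumeIoiPow_integral, hdim, Nat.sub_add_cancel hd]

lemma gauss_total (d : ℕ) :
    ∫ x : EuclideanSpace ℝ (Fin d), Real.exp (-π * ‖x‖ ^ 2) = 1 := by
  rw [GaussianFourier.integral_rexp_neg_mul_sq_norm pi_pos, div_self pi_ne_zero,
    Real.one_rpow]

lemma toSphere_mass {d : ℕ} (hd : 0 < d) :
    ((volume : Measure (EuclideanSpace ℝ (Fin d))).toSphere univ).toReal * Ig (d-1) = 1 := by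
  haveI : Nontrivial (EuclideanSpace ℝ (Fin d)) := by
    refine Module.nontrivial_of_finrank_pos (R := ℝ) ?_
    rw [finrank_euclideanSpace_fin]; exact hd
  have hdim : Module.finrank ℝ (EuclideanSpace ℝ (Fin d)) = d := finrank_euclideanSpace_fin
  have h := integral_fun_norm_addHaar (volume : Measure (EuclideanSpace ℝ (Fin d)))
    (fun r => Real.exp (-π * r ^ 2))
  rw [gauss_total d, hdim] at h
  simp only [smul_eq_mul] at h
  have h2 : ((volume : Measure (EuclideanSpace ℝ (Fin d))).toSphere univ).toReal
      = d * ((volume : Measure (EuclideanSpace ℝ (Fin d))) (Metric.ball 0 1)).toReal := by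
    rw [Measure.toSphere_apply_univ, hdim, ENNReal.toReal_mul]
    simp
  rw [h2, Ig]
  simp only [nsmul_eq_mul] at h
  rw [mul_assoc]
  exact h.symm

lemma pi_form (d p : ℕ) :
    (∫ x : EuclideanSpace ℝ (Fin d),
      Real.sqrt (∑ i ∈ Finset.univ.filter (fun i : Fin d => (i:ℕ) < p), (x i)^2) *
        Real.exp (-π * ‖x‖^2))
    = ∫ y : Fin d → ℝ,
      Real.sqrt (∑ i ∈ Finset.univ.filter (fun i : Fin d => (i:ℕ) < p), (y i)^2) *
        Real.exp (-π * ∑ i, (y i)^2) := by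
  have h := (EuclideanSpace.volume_preserving_symm_measurableEquiv_toLp (Fin d)).symm
  rw [← h.integral_comp (MeasurableEquiv.measurableEmbedding _)]
  refine integral_congr_ae (Filter.Eventually.of_forall fun y => ?_)
  have hc : ∀ i, ((MeasurableEquiv.toLp 2 (Fin d → ℝ)).symm.symm y) i = y i := fun i => rfl
  have hn : ‖(MeasurableEquiv.toLp 2 (Fin d → ℝ)).symm.symm y‖^2 = ∑ i, (y i)^2 := by
    rw [EuclideanSpace.norm_eq, Real.sq_sqrt (by positivity)]
    simp [hc, sq_abs]
  simp only [hc, hn]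

lemma pi_split (p q : ℕ) :
    (∫ y : Fin (p + q) → ℝ,
      Real.sqrt (∑ i ∈ Finset.univ.filter (fun i : Fin (p+q) => (i:ℕ) < p), (y i)^2) *
        Real.exp (-π * ∑ i, (y i)^2))
    = (∫ y : Fin p → ℝ, Real.sqrt (∑ i, (y i)^2) * Real.exp (-π * ∑ i, (y i)^2)) *
      (∫ z : Fin q → ℝ, Real.exp (-π * ∑ j, (z j)^2)) := by
  rw [← (volume_measurePreserving_piCongrLeft (fun _ : Fin (p+q) => ℝ)
      finSumFinEquiv).integral_comp (MeasurableEquiv.measurableEmbedding _)]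
  rw [← (volume_measurePreserving_sumPiEquivProdPi_symm
      (fun _ : Fin p ⊕ Fin q => ℝ)).integral_comp (MeasurableEquiv.measurableEmbedding _)]
  rw [Measure.volume_eq_prod, ← integral_prod_mul
    (fun y : Fin p → ℝ => Real.sqrt (∑ i, (y i)^2) * Real.exp (-π * ∑ i, (y i)^2))
    (fun z : Fin q → ℝ => Real.exp (-π * ∑ j, (z j)^2))]
  refine integral_congr_ae (Filter.Eventually.of_forall fun z => ?_)
  set w := (MeasurableEquiv.sumPiEquivProdPi (fun _ : Fin p ⊕ Fin q => ℝ)).symm z with hw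
  have hwl : ∀ i, w (Sum.inl i) = z.1 i := fun i => rfl
  have hwr : ∀ j, w (Sum.inr j) = z.2 j := fun j => rfl
  have happ : ∀ s, (MeasurableEquiv.piCongrLeft (fun _ : Fin (p+q) => ℝ) finSumFinEquiv) w
      (finSumFinEquiv s) = w s := fun s => Equiv.piCongrLeft_apply_apply _ _ _ _
  have hfil : (∑ i ∈ Finset.univ.filter (fun i : Fin (p+q) => (i:ℕ) < p),
      ((MeasurableEquiv.piCongrLeft (fun _ : Fin (p+q) => ℝ) finSumFinEquiv) w i)^2)
      = ∑ i : Fin p, (z.1 i)^2 := by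
    rw [Finset.sum_filter, ← Equiv.sum_comp finSumFinEquiv
      (fun j : Fin (p+q) => if (j:ℕ) < p then
        ((MeasurableEquiv.piCongrLeft (fun _ : Fin (p+q) => ℝ) finSumFinEquiv) w j)^2 else 0)]
    rw [Fintype.sum_sum_type]
    simp only [happ]
    simp only [hwl, hwr, finSumFinEquiv_apply_left, finSumFinEquiv_apply_right,
      Fin.coe_castAdd, Fin.coe_natAdd, Fin.is_lt, if_true]
    simp [Nat.not_lt.mpr (Nat.le_add_right p _)]
  have htot : (∑ i : Fin (p+q),
      ((MeasurableEquiv.piCongrLeft (fun _ : Fin (p+q) => ℝ) finSumFinEquiv) w i)^2)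
      = (∑ i : Fin p, (z.1 i)^2) + ∑ j : Fin q, (z.2 j)^2 := by
    rw [← Equiv.sum_comp finSumFinEquiv
      (fun j : Fin (p+q) =>
        ((MeasurableEquiv.piCongrLeft (fun _ : Fin (p+q) => ℝ) finSumFinEquiv) w j)^2)]
    rw [Fintype.sum_sum_type]
    simp only [happ]
    simp only [hwl, hwr]
  beta_reduce
  rw [← hw, hfil, htot]
  rw [mul_add, Real.exp_add]
  ring

lemma gauss_pi (q : ℕ) : ∫ z : Fin q → ℝ, Real.exp (-π * ∑ j, (z j)^2) = 1 := by
  have h := (EuclideanSpace.volume_preserving_symm_measurableEquiv_toLp (Fin q)).symm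
  rw [← gauss_total q, ← h.integral_comp (MeasurableEquiv.measurableEmbedding _)
    (fun x : EuclideanSpace ℝ (Fin q) => Real.exp (-π * ‖x‖^2))]
  refine integral_congr_ae (Filter.Eventually.of_forall fun y => ?_)
  have hn : ‖(MeasurableEquiv.toLp 2 (Fin q → ℝ)).symm.symm y‖^2 = ∑ i, (y i)^2 := by
    rw [EuclideanSpace.norm_eq, Real.sq_sqrt (by positivity)]
    refine Finset.sum_congr rfl fun i _ => ?_
    rw [Real.norm_eq_abs, sq_abs]
    rfl
  simp only [hn]

lemma norm_case (p : ℕ) :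
    (∫ y : Fin p → ℝ, Real.sqrt (∑ i, (y i)^2) * Real.exp (-π * ∑ i, (y i)^2))
      = ∫ x : EuclideanSpace ℝ (Fin p), ‖x‖ * Real.exp (-π * ‖x‖^2) := by
  have h := pi_form p p
  rw [Finset.filter_true_of_mem (fun i _ => i.is_lt)] at h
  rw [← h]
  refine integral_congr_ae (Filter.Eventually.of_forall fun x => ?_)
  have : Real.sqrt (∑ i, (x i)^2) = ‖x‖ := by
    rw [EuclideanSpace.norm_eq]
    simp [sq_abs]
  simp only [this]

lemma sphere_norm_int {p : ℕ} (hp : 0 < p) :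
    (∫ x : EuclideanSpace ℝ (Fin p), ‖x‖ * Real.exp (-π * ‖x‖^2))
      = ((volume : Measure (EuclideanSpace ℝ (Fin p))).toSphere univ).toReal * Ig p := by
  have hpol := polar hp (fun x => ‖x‖) ?_
  · rw [hpol]
    congr 1
    have h1 : ∀ ω : Metric.sphere (0 : EuclideanSpace ℝ (Fin p)) 1,
        ‖(ω : EuclideanSpace ℝ (Fin p))‖ = 1 := fun ω => mem_sphere_zero_iff_norm.mp ω.2
    simp_rw [h1]
    rw [integral_const, smul_eq_mul, mul_one]
    rfl
  · intro r hr x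
    show ‖r • x‖ = r * ‖x‖
    rw [norm_smul, Real.norm_eq_abs, abs_of_nonneg hr]

lemma sphere_int {p q : ℕ} (hp : 0 < p) :
    (∫ ω : Metric.sphere (0 : EuclideanSpace ℝ (Fin (p+q))) 1,
      Real.sqrt (∑ i ∈ Finset.univ.filter (fun i : Fin (p+q) => (i:ℕ) < p),
        ((ω : EuclideanSpace ℝ (Fin (p+q))) i)^2) ∂(volume.toSphere)) * Ig (p+q)
    = (Ig (p-1))⁻¹ * Ig p := by
  have hd : 0 < p + q := lt_of_lt_of_le hp (Nat.le_add_right p q)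
  have hhom : ∀ r : ℝ, 0 ≤ r → ∀ x : EuclideanSpace ℝ (Fin (p+q)),
      Real.sqrt (∑ i ∈ Finset.univ.filter (fun i : Fin (p+q) => (i:ℕ) < p), ((r • x) i)^2)
        = r * Real.sqrt (∑ i ∈ Finset.univ.filter (fun i : Fin (p+q) => (i:ℕ) < p), (x i)^2) := by
    intro r hr x
    have hc : ∀ i : Fin (p+q), ((r • x) i) = r * x i := fun i => rfl
    simp_rw [hc, mul_pow, ← Finset.mul_sum]
    rw [Real.sqrt_mul (sq_nonneg r), Real.sqrt_sq hr]
  have hpol := polar hd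
    (fun x => Real.sqrt (∑ i ∈ Finset.univ.filter (fun i : Fin (p+q) => (i:ℕ) < p), (x i)^2))
    (fun r hr x => hhom r hr x)
  rw [← hpol, pi_form (p+q) p, pi_split p q, gauss_pi q, mul_one, norm_case p,
    sphere_norm_int hp]
  have hm := toSphere_mass hp
  have hmm : ((volume : Measure (EuclideanSpace ℝ (Fin p))).toSphere univ).toReal
      = (Ig (p-1))⁻¹ := eq_inv_of_mul_eq_one_left hm
  rw [hmm]

noncomputable def sphereUniform (d : ℕ) :
    Measure (Metric.sphere (0 : EuclideanSpace ℝ (Fin d)) 1) :=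
  ((volume : Measure (EuclideanSpace ℝ (Fin d))).toSphere Set.univ)⁻¹ •
    (volume : Measure (EuclideanSpace ℝ (Fin d))).toSphere

/-- `E_MB[p,d] = ∫_{S^{d-1}} (∑_{i=1}^p x_i²)^{1/2} dσ_d(x)`. -/
noncomputable def E_MB (p d : ℕ) : ℝ :=
  ∫ x : Metric.sphere (0 : EuclideanSpace ℝ (Fin d)) 1,
    Real.sqrt (∑ i ∈ Finset.univ.filter (fun i : Fin d => (i : ℕ) < p),
      ((x : EuclideanSpace ℝ (Fin d)) i) ^ 2) ∂(sphereUniform d)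

lemma E_MB_eq {p d : ℕ} (hp : 0 < p) (hpd : p ≤ d) :
    E_MB p d = (Ig p / Ig (p - 1)) * (Ig (d - 1) / Ig d) := by
  have hd : 0 < d := lt_of_lt_of_le hp hpd
  have hmassd := toSphere_mass hd
  have hmmd : ((volume : Measure (EuclideanSpace ℝ (Fin d))).toSphere univ).toReal
      = (Ig (d-1))⁻¹ := eq_inv_of_mul_eq_one_left hmassd
  obtain ⟨q, rfl⟩ : ∃ q, d = p + q := ⟨d - p, (Nat.add_sub_cancel' hpd).symm⟩
  unfold E_MB sphereUniform
  rw [integral_smul_measure, ENNReal.toReal_inv, hmmd, inv_inv]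
  have hS := sphere_int (p := p) (q := q) hp
  have hIg := (Ig_pos (p+q)).ne'
  have hS' : (∫ ω : Metric.sphere (0 : EuclideanSpace ℝ (Fin (p+q))) 1,
      Real.sqrt (∑ i ∈ Finset.univ.filter (fun i : Fin (p+q) => (i:ℕ) < p),
        ((ω : EuclideanSpace ℝ (Fin (p+q))) i)^2) ∂(volume.toSphere))
      = (Ig (p-1))⁻¹ * Ig p / Ig (p+q) := (eq_div_iff hIg).mpr hS
  rw [smul_eq_mul, hS']
  have h1 := (Ig_pos (p-1)).ne'
  field_simp

lemma Ig_ratio (m n : ℕ) : Ig m / Ig n =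
    π ^ (((n:ℝ) - (m:ℝ))/2) * (Real.Gamma (((m:ℝ)+1)/2) / Real.Gamma (((n:ℝ)+1)/2)) := by
  rw [Ig_eq, Ig_eq]
  have h1 : (π:ℝ) ^ (-((n:ℝ)+1)/2) ≠ 0 := (Real.rpow_pos_of_pos pi_pos _).ne'
  have h2 : Real.Gamma (((n:ℝ)+1)/2) ≠ 0 :=
    (Real.Gamma_pos_of_pos (by positivity)).ne'
  have h3 : (π:ℝ) ^ (((n:ℝ)-(m:ℝ))/2) * π ^ (-((n:ℝ)+1)/2) = π ^ (-((m:ℝ)+1)/2) := by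
    rw [← Real.rpow_add pi_pos]
    congr 1
    ring
  rw [div_eq_iff (mul_ne_zero (mul_ne_zero h1 (by norm_num)) h2), ← h3]
  field_simp

/-- For `d > 2`, `E_MB[2,d] = (√π/2) Γ(d/2)/Γ(d/2+1/2)`; moreover the
ratios of model-based expected decreases separate in `p` and `d`. -/
theorem E_MB_two_and_ratios :
    (∀ d : ℕ, 2 < d → E_MB 2 d = (Real.sqrt π / 2) *
        (Real.Gamma ((d : ℝ) / 2) / Real.Gamma ((d : ℝ) / 2 + 1 / 2))) ∧
    (∀ d₁ d₂ p₁ p₂ : ℕ, 1 < d₁ → 1 < d₂ → 1 ≤ p₁ → 1 ≤ p₂ →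
      p₁ ≤ min d₁ d₂ → p₂ ≤ min d₁ d₂ →
      E_MB p₁ d₁ / E_MB p₂ d₁ = E_MB p₁ d₂ / E_MB p₂ d₂) ∧
    (∀ d₁ d₂ p₁ p₂ : ℕ, 1 < d₁ → 1 < d₂ → 1 ≤ p₁ → 1 ≤ p₂ →
      p₁ ≤ min d₁ d₂ → p₂ ≤ min d₁ d₂ →
      E_MB p₁ d₁ / E_MB p₁ d₂ = E_MB p₂ d₁ / E_MB p₂ d₂) := by
  have key : ∀ p d : ℕ, 1 ≤ p → p ≤ d →
      E_MB p d = (Ig p / Ig (p-1)) * (Ig (d-1) / Ig d) := fun p d hp hpd => E_MB_eq hp hpd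
  have hgpos : ∀ d : ℕ, 0 < Ig (d-1) / Ig d := fun d => div_pos (Ig_pos _) (Ig_pos _)
  have hcpos : ∀ p : ℕ, 0 < Ig p / Ig (p-1) := fun p => div_pos (Ig_pos _) (Ig_pos _)
  refine ⟨?_, ?_, ?_⟩
  · intro d hd
    rw [key 2 d (by norm_num) (by omega)]
    have hc : ((2:ℕ) - 1 : ℕ) = 1 := rfl
    rw [hc, Ig_ratio 2 1, Ig_ratio (d-1) d]
    have hd1 : ((d-1 : ℕ) : ℝ) = (d:ℝ) - 1 := by
      push_cast [Nat.cast_sub (by omega : 1 ≤ d)]; ring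
    rw [hd1]
    have hG32 : Real.Gamma ((3:ℝ)/2) = Real.sqrt π / 2 := by
      rw [show (3:ℝ)/2 = 1/2 + 1 by norm_num, Real.Gamma_add_one (by norm_num),
        Real.Gamma_one_half_eq]
      ring
    push_cast
    norm_num
    have hone : π ^ (-(1/2):ℝ) * π ^ ((1/2):ℝ) = 1 := by
      rw [← Real.rpow_add pi_pos]; norm_num
    rw [hG32, show ((d:ℝ)+1)/2 = (d:ℝ)/2+1/2 by ring]
    linear_combination (Real.sqrt π / 2 *
      (Real.Gamma ((d:ℝ)/2) / Real.Gamma ((d:ℝ)/2 + 1/2))) * hone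
  · intro d₁ d₂ p₁ p₂ hd₁ hd₂ hp₁ hp₂ h₁ h₂
    rw [key p₁ d₁ hp₁ (le_trans h₁ (min_le_left _ _)),
      key p₂ d₁ hp₂ (le_trans h₂ (min_le_left _ _)),
      key p₁ d₂ hp₁ (le_trans h₁ (min_le_right _ _)),
      key p₂ d₂ hp₂ (le_trans h₂ (min_le_right _ _))]
    rw [mul_div_mul_right _ _ (hgpos d₁).ne', mul_div_mul_right _ _ (hgpos d₂).ne']
  · intro d₁ d₂ p₁ p₂ hd₁ hd₂ hp₁ hp₂ h₁ h₂
    rw [key p₁ d₁ hp₁ (le_trans h₁ (min_le_left _ _)),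
      key p₁ d₂ hp₁ (le_trans h₁ (min_le_right _ _)),
      key p₂ d₁ hp₂ (le_trans h₂ (min_le_left _ _)),
      key p₂ d₂ hp₂ (le_trans h₂ (min_le_right _ _))]
    rw [mul_div_mul_left _ _ (hcpos p₁).ne', mul_div_mul_left _ _ (hcpos p₂).ne']
end

section
/- For every real p > 0, Γ(p/2 + 1/2)² / (Γ(p/2) · Γ(p/2 + 1)) > p / (p + √3 - 1); consequently, for every integer p ≥ 2, Γ(p/2 + 1/2)² / (Γ(p/2) · Γ(p/2 + 1)) > (p+1) / (p+2). -/
open Real Filter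

noncomputable def c3 : ℝ := (Real.sqrt 3 - 1) / 2

lemma sqrt3_lt : Real.sqrt 3 < 2 := by
  nlinarith [Real.sq_sqrt (by norm_num : (3:ℝ) ≥ 0), Real.sqrt_nonneg 3]

lemma sqrt3_gt : 1 < Real.sqrt 3 := by
  nlinarith [Real.sq_sqrt (by norm_num : (3:ℝ) ≥ 0), Real.sqrt_nonneg 3]

lemma c3_pos : 0 < c3 := by unfold c3; linarith [sqrt3_gt]

lemma c3_lt : c3 < 1/2 := by unfold c3; linarith [sqrt3_lt]

noncomputable def rK (x : ℝ) : ℝ :=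
  Real.Gamma (x + 1/2) ^ 2 * (x + c3) / (x ^ 2 * Real.Gamma x ^ 2)

lemma gamma_sq_le (x : ℝ) (hx : 0 < x) :
    (x * Real.Gamma x) ^ 2 ≤ (x + 1/2) * Real.Gamma (x + 1/2) ^ 2 := by
  have h1 : 0 < x + 1/2 := by linarith
  have h3 : 0 < x + 3/2 := by linarith
  have hmid := Real.Gamma_mul_add_mul_le_rpow_Gamma_mul_rpow_Gamma
    (s := x + 1/2) (t := x + 3/2) (a := 1/2) (b := 1/2) h1 h3 (by norm_num) (by norm_num)
    (by norm_num)
  have heq : (1/2 : ℝ) * (x + 1/2) + (1/2 : ℝ) * (x + 3/2) = x + 1 := by ring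
  rw [heq] at hmid
  have hG1 : Real.Gamma (x + 1) = x * Real.Gamma x := Real.Gamma_add_one hx.ne'
  have hG3 : Real.Gamma (x + 3/2) = (x + 1/2) * Real.Gamma (x + 1/2) := by
    rw [show x + 3/2 = (x + 1/2) + 1 by ring, Real.Gamma_add_one h1.ne']
  have hge1 : (0:ℝ) ≤ Real.Gamma (x + 1/2) := (Real.Gamma_pos_of_pos h1).le
  have hge3 : (0:ℝ) ≤ Real.Gamma (x + 3/2) := (Real.Gamma_pos_of_pos h3).le
  have hsq : (Real.Gamma (x + 1/2) ^ ((1:ℝ)/2) * Real.Gamma (x + 3/2) ^ ((1:ℝ)/2)) ^ 2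
      = Real.Gamma (x + 1/2) * Real.Gamma (x + 3/2) := by
    rw [mul_pow, ← Real.rpow_natCast (_ ^ ((1:ℝ)/2)) 2, ← Real.rpow_natCast (_ ^ ((1:ℝ)/2)) 2,
      ← Real.rpow_mul hge1, ← Real.rpow_mul hge3]
    norm_num
  have hGpos : 0 ≤ Real.Gamma (x + 1) := (Real.Gamma_pos_of_pos (by linarith)).le
  have := pow_le_pow_left₀ hGpos hmid 2
  rw [hsq, hG1, hG3] at this
  nlinarith [this]

lemma rK_lower (x : ℝ) (hx : 0 < x) : (x + c3) / (x + 1/2) ≤ rK x := by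
  have h1 : 0 < x + 1/2 := by linarith
  have hG : 0 < Real.Gamma x := Real.Gamma_pos_of_pos hx
  have hGh : 0 < Real.Gamma (x + 1/2) := Real.Gamma_pos_of_pos h1
  have hden : 0 < x ^ 2 * Real.Gamma x ^ 2 := by positivity
  rw [rK, div_le_div_iff₀ h1 hden]
  have key := gamma_sq_le x hx
  have hc : 0 < x + c3 := by linarith [c3_pos]
  nlinarith [mul_le_mul_of_nonneg_left key hc.le]

lemma rK_step (x : ℝ) (hx : 0 < x) : rK (x + 1) < rK x := by
  have h1 : 0 < x + 1/2 := by linarith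
  have hG : 0 < Real.Gamma x := Real.Gamma_pos_of_pos hx
  have hGh : 0 < Real.Gamma (x + 1/2) := Real.Gamma_pos_of_pos h1
  have hG1 : Real.Gamma (x + 1) = x * Real.Gamma x := Real.Gamma_add_one hx.ne'
  have hG3 : Real.Gamma (x + 1 + 1/2) = (x + 1/2) * Real.Gamma (x + 1/2) := by
    rw [show x + 1 + 1/2 = (x + 1/2) + 1 by ring, Real.Gamma_add_one h1.ne']
  have hden1 : (0:ℝ) < (x+1) ^ 2 * Real.Gamma (x+1) ^ 2 := by
    have : 0 < Real.Gamma (x+1) := Real.Gamma_pos_of_pos (by linarith)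
    positivity
  have hden2 : (0:ℝ) < x ^ 2 * Real.Gamma x ^ 2 := by positivity
  rw [rK, rK, div_lt_div_iff₀ hden1 hden2, hG1, hG3]
  have hpoly : (x + 1/2)^2 * (x + 1 + c3) < (x + c3) * (x + 1)^2 := by
    have hs := Real.sq_sqrt (by norm_num : (3:ℝ) ≥ 0)
    unfold c3
    nlinarith [sqrt3_gt, sqrt3_lt, hx]
  nlinarith [mul_pos (mul_pos hx hx) (mul_pos hG hG), sq_nonneg (Real.Gamma (x+1/2)),
    mul_lt_mul_of_pos_right hpoly (by positivity : (0:ℝ) < x^2 * Real.Gamma x ^2 * Real.Gamma (x+1/2)^2)]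

lemma rK_mono (x : ℝ) (hx : 0 < x) : ∀ n : ℕ, rK (x + n) ≤ rK x := by
  intro n
  induction n with
  | zero => simp
  | succ n ih =>
    have hxn : 0 < x + n := by positivity
    have := rK_step (x + n) hxn
    push_cast
    calc rK (x + (n + 1)) = rK ((x + n) + 1) := by ring_nf
    _ ≤ rK (x + n) := this.le
    _ ≤ rK x := ih

lemma rK_ge_one (x : ℝ) (hx : 0 < x) : 1 ≤ rK x := by
  have hlim : Tendsto (fun n : ℕ => (x + n + c3) / (x + n + 1/2)) atTop (nhds 1) := by
    have h1 : Tendsto (fun n : ℕ => x + 1/2 + (n:ℝ)) atTop atTop :=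
      tendsto_atTop_add_const_left _ _ tendsto_natCast_atTop_atTop
    have h2 : Tendsto (fun n : ℕ => (c3 - 1/2) / (x + 1/2 + n)) atTop (nhds 0) :=
      Tendsto.div_atTop tendsto_const_nhds h1
    have h3 : Tendsto (fun n : ℕ => 1 + (c3 - 1/2) / (x + 1/2 + n)) atTop (nhds (1 + 0)) :=
      tendsto_const_nhds.add h2
    rw [add_zero] at h3
    refine h3.congr fun n => ?_
    have hne : x + 1/2 + (n:ℝ) ≠ 0 := by positivity
    field_simp
    ring
  refine le_of_tendsto hlim (Filter.Eventually.of_forall fun n => ?_)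
  have hxn : 0 < x + n := by positivity
  calc (x + n + c3) / (x + n + 1/2) ≤ rK (x + n) := rK_lower _ hxn
  _ ≤ rK x := rK_mono x hx n

lemma rK_gt_one (x : ℝ) (hx : 0 < x) : 1 < rK x := by
  have h1 := rK_ge_one (x + 1) (by linarith)
  have h2 := rK_step x hx
  linarith

/-- For every real `p > 0`,
`Γ(p/2+1/2)² / (Γ(p/2) Γ(p/2+1)) > p/(p+√3-1)`; consequently, for every integer `p ≥ 2`,
`Γ(p/2+1/2)² / (Γ(p/2) Γ(p/2+1)) > (p+1)/(p+2)`. -/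
theorem gamma_ratio_kershaw :
    (∀ p : ℝ, 0 < p →
      Real.Gamma (p / 2 + 1 / 2) ^ 2 / (Real.Gamma (p / 2) * Real.Gamma (p / 2 + 1)) >
        p / (p + Real.sqrt 3 - 1)) ∧
    (∀ p : ℕ, 2 ≤ p →
      Real.Gamma ((p : ℝ) / 2 + 1 / 2) ^ 2 /
          (Real.Gamma ((p : ℝ) / 2) * Real.Gamma ((p : ℝ) / 2 + 1)) >
        ((p : ℝ) + 1) / ((p : ℝ) + 2)) := by
  have part1 : ∀ p : ℝ, 0 < p →
      Real.Gamma (p / 2 + 1 / 2) ^ 2 / (Real.Gamma (p / 2) * Real.Gamma (p / 2 + 1)) >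
        p / (p + Real.sqrt 3 - 1) := by
    intro p hp
    set x := p / 2 with hxdef
    have hx : 0 < x := by positivity
    have hG : 0 < Real.Gamma x := Real.Gamma_pos_of_pos hx
    have hGh : 0 < Real.Gamma (x + 1/2) := Real.Gamma_pos_of_pos (by linarith)
    have hG1 : Real.Gamma (x + 1) = x * Real.Gamma x := Real.Gamma_add_one hx.ne'
    have hr := rK_gt_one x hx
    rw [rK, lt_div_iff₀ (by positivity)] at hr
    have hc : 0 < x + c3 := by linarith [c3_pos]
    have hd : 0 < p + Real.sqrt 3 - 1 := by
      have := sqrt3_gt; linarith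
    rw [gt_iff_lt, div_lt_div_iff₀ hd (by positivity), hG1]
    have hceq : p + Real.sqrt 3 - 1 = 2 * (x + c3) := by
      rw [hxdef]; unfold c3; ring
    rw [hceq, show p = 2*x by rw [hxdef]; ring]
    nlinarith [hr]
  refine ⟨part1, fun p hp => ?_⟩
  rcases eq_or_lt_of_le hp with h2 | h3
  · -- p = 2
    subst h2
    have e1 : ((2:ℕ):ℝ)/2 = 1 := by norm_num
    rw [e1, Real.Gamma_one, show (1:ℝ) + 1/2 = 1/2 + 1 by ring,
      Real.Gamma_add_one (by norm_num : (1/2:ℝ) ≠ 0), Real.Gamma_one_half_eq,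
      show (1:ℝ) + 1 = 2 by norm_num, Real.Gamma_two]
    have hpi : (Real.sqrt π) ^ 2 = π := Real.sq_sqrt Real.pi_nonneg
    have h3 := Real.pi_gt_three
    rw [gt_iff_lt, div_lt_div_iff₀ (by norm_num) (by norm_num)]
    push_cast
    nlinarith [hpi, h3]
  · -- p ≥ 3
    have hp3 : (3:ℝ) ≤ (p:ℝ) := by exact_mod_cast h3
    have h1 := part1 p (by linarith)
    have hd : 0 < (p:ℝ) + Real.sqrt 3 - 1 := by linarith [sqrt3_gt]
    have hbridge : ((p:ℝ) + 1) / ((p:ℝ) + 2) ≤ (p:ℝ) / ((p:ℝ) + Real.sqrt 3 - 1) := by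
      rw [div_le_div_iff₀ (by linarith) hd]
      nlinarith [Real.sq_sqrt (by norm_num : (3:ℝ) ≥ 0), sqrt3_gt, sqrt3_lt]
    exact lt_of_le_of_lt hbridge h1
end
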